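/- arXiv:2411.12659 — 4 statements merged into one kernel-verified Lean document; each statement's English description precedes it below -/
import Mathlib

section
/- The disjoint union of cliques each of size at most (1-c)t is a (c,t)-sparse graph, contains no induced cycle of length at least 4, and if each clique has size exactly ⌊(1-c)t⌋ ≥ 2 and t = Ω(n), it has Ω(n^2) edges. -/
/-!
In a disjoint union of cliques every vertex has degree one less than the size of its clique.
Counting `e(A,B)` from the `A` side gives `e(A,B) ≤ |A|·(1-c)t ≤ (1-c)|A||B|`.
Adjacency is transitive on distinct vertices, whereas the vertices `0 ~ 1 ~ 2` of a cycle of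
length at least `4` form an induced path. With cliques of size `k = ⌊(1-c)t⌋ ≥ 2` the graph is
`(k-1)`-regular, and `k - 1 ≥ (1-c)t/4`, so `2|E| = n(k-1) ≥ (1-c)n²/(4C)`.
-/

open Finset

/-- Number of pairs `(a,b) ∈ A × B` with `{a,b}` an edge of `G`. -/
def epairs {V : Type*} [DecidableEq V] (G : SimpleGraph V) [DecidableRel G.Adj]
    (A B : Finset V) : ℕ :=
  ((A ×ˢ B).filter fun p => G.Adj p.1 p.2).card

namespace SimpleGraph

theorem cycleGraph_adj_zero_one (n : ℕ) : (cycleGraph (n + 4)).Adj 0 1 := by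
  simp [cycleGraph_adj]

theorem cycleGraph_adj_one_two (n : ℕ) : (cycleGraph (n + 4)).Adj 1 2 := by
  rw [cycleGraph_adj]
  exact Or.inr (sub_eq_of_eq_add (by simp [Fin.ext_iff, Fin.val_add, Nat.mod_eq_of_lt]))

theorem cycleGraph_not_adj_zero_two (n : ℕ) : ¬(cycleGraph (n + 4)).Adj 0 2 := by
  rw [cycleGraph_adj, zero_sub, sub_zero, neg_eq_iff_add_eq_zero]
  simp [Fin.ext_iff, Fin.val_add, Nat.mod_eq_of_lt]

theorem adj_trans_of_adj_iff_fiber {V ι : Type*} {G : SimpleGraph V} {f : V → ι}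
    (hG : ∀ u v, G.Adj u v ↔ u ≠ v ∧ f u = f v) (u v w : V) (huv : G.Adj u v)
    (hvw : G.Adj v w) (huw : u ≠ w) : G.Adj u w := by
  rw [hG] at *
  exact ⟨huw, huv.2.trans hvw.2⟩

theorem isEmpty_cycleGraph_embedding_of_adj_trans {V : Type*} {G : SimpleGraph V}
    (hG : ∀ u v w, G.Adj u v → G.Adj v w → u ≠ w → G.Adj u w) {m : ℕ} (hm : 4 ≤ m) :
    IsEmpty (cycleGraph m ↪g G) := by
  obtain ⟨n, rfl⟩ := Nat.exists_eq_add_of_le' hm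
  refine ⟨fun φ => cycleGraph_not_adj_zero_two n (φ.map_adj_iff.1 ?_)⟩
  have h02 : (0 : Fin (n + 4)) ≠ 2 := by simp [Fin.ext_iff, Nat.mod_eq_of_lt]
  exact hG _ _ _ (φ.map_adj_iff.2 (cycleGraph_adj_zero_one n))
    (φ.map_adj_iff.2 (cycleGraph_adj_one_two n)) (φ.injective.ne h02)

variable {V : Type*} [Fintype V] {G : SimpleGraph V} [DecidableRel G.Adj]

theorem epairs_le_sum_degree [DecidableEq V] (A B : Finset V) :
    epairs G A B ≤ ∑ a ∈ A, G.degree a := by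
  rw [epairs, card_filter, sum_product]
  gcongr with a
  rw [← card_filter, ← card_neighborFinset_eq_degree]
  exact card_le_card fun b hb => by simpa using (mem_filter.1 hb).2

theorem epairs_le_mul_card_mul_card [DecidableEq V] {s t : ℝ} (hs : 0 ≤ s)
    (hdeg : ∀ v, (G.degree v : ℝ) ≤ s * t) {A B : Finset V} (hB : t ≤ #B) :
    (epairs G A B : ℝ) ≤ s * #A * #B :=
  calc (epairs G A B : ℝ) ≤ ∑ a ∈ A, (G.degree a : ℝ) := by
        exact_mod_cast epairs_le_sum_degree A B
    _ ≤ ∑ _a ∈ A, s * t := sum_le_sum fun a _ => hdeg a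
    _ = #A * (s * t) := by rw [sum_const, nsmul_eq_mul]
    _ ≤ s * #A * #B := by
        rw [mul_left_comm, ← mul_assoc]
        exact mul_le_mul_of_nonneg_left hB (by positivity)

theorem two_mul_card_edgeFinset_of_degree_eq {d : ℕ} (hd : ∀ v, G.degree v = d) :
    2 * #G.edgeFinset = Fintype.card V * d := by
  rw [← sum_degrees_eq_twice_card_edges]
  simp [hd]

theorem degree_eq_card_fiber_sub_one [DecidableEq V] {ι : Type*} [DecidableEq ι] {f : V → ι}
    (hG : ∀ u v, G.Adj u v ↔ u ≠ v ∧ f u = f v) (v : V) :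
    G.degree v = #{u | f u = f v} - 1 := by
  have hnbr : G.neighborFinset v = ({u | f u = f v} : Finset V).erase v := by
    ext u
    simp [hG, and_comm, eq_comm]
  rw [← card_neighborFinset_eq_degree, hnbr, card_erase_of_mem (by simp)]

end SimpleGraph

theorem div_four_le_floor_sub_one {x : ℝ} (h : 2 ≤ ⌊x⌋₊) : x / 4 ≤ (⌊x⌋₊ : ℝ) - 1 := by
  have hk : (2 : ℝ) ≤ ⌊x⌋₊ := by exact_mod_cast h
  linarith [Nat.lt_floor_add_one x]

theorem cliques_sparse_no_induced_cycle_many_edges_general (c C : ℝ)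
    (hc1 : c < 1) (hC : 0 < C) :
    ∃ c' > (0 : ℝ),
      ∀ (V : Type) (_ : Fintype V) (_ : DecidableEq V)
        (ι : Type) (_ : DecidableEq ι) (f : V → ι)
        (G : SimpleGraph V) (_ : DecidableRel G.Adj) (t : ℝ),
        (∀ u v : V, G.Adj u v ↔ (u ≠ v ∧ f u = f v)) →
        -- (1) if every clique has size at most (1-c)t, then G is (c,t)-sparse
        (((∀ v : V, ((Finset.univ.filter fun u => f u = f v).card : ℝ) ≤ (1 - c) * t) →
          ∀ A B : Finset V, t ≤ A.card → t ≤ B.card →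
            (epairs G A B : ℝ) ≤ (1 - c) * A.card * B.card) ∧
        -- (2) G has no induced cycle of length at least 4
        (∀ m : ℕ, 4 ≤ m → IsEmpty (SimpleGraph.cycleGraph m ↪g G)) ∧
        -- (3) if every clique has size exactly ⌊(1-c)t⌋ ≥ 2 and n ≤ C·t,
        --     then G has at least c'·n² edges
        ((∀ v : V, (Finset.univ.filter fun u => f u = f v).card = ⌊(1 - c) * t⌋₊) →
          2 ≤ ⌊(1 - c) * t⌋₊ →
          (Fintype.card V : ℝ) ≤ C * t →
          c' * (Fintype.card V : ℝ) ^ 2 ≤ (G.edgeFinset.card : ℝ))) := by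
  refine ⟨(1 - c) / (8 * C), div_pos (sub_pos.2 hc1) (by positivity), ?_⟩
  intro V _ _ ι _ f G _ t hG
  have hdeg := SimpleGraph.degree_eq_card_fiber_sub_one hG
  refine ⟨fun hsize A B _ hB => ?_, fun m hm => ?_, fun hsize hk hn => ?_⟩
  · refine SimpleGraph.epairs_le_mul_card_mul_card (sub_pos.2 hc1).le (fun v => ?_) hB
    rw [hdeg]
    exact (Nat.cast_le.2 (Nat.sub_le _ _)).trans (hsize v)
  · exact SimpleGraph.isEmpty_cycleGraph_embedding_of_adj_trans
      (SimpleGraph.adj_trans_of_adj_iff_fiber hG) hm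
  · set k := ⌊(1 - c) * t⌋₊
    have hE : 2 * (#G.edgeFinset : ℝ) = Fintype.card V * ((k : ℝ) - 1) := by
      have := SimpleGraph.two_mul_card_edgeFinset_of_degree_eq fun v => (hdeg v).trans
        (congrArg (· - 1) (hsize v))
      rw [← Nat.cast_pred (by omega)]
      exact_mod_cast this
    set n := (Fintype.card V : ℝ)
    have ht : n / C ≤ t := (div_le_iff₀ hC).2 (by linarith)
    calc (1 - c) / (8 * C) * n ^ 2 = n * ((1 - c) * (n / C) / 4) / 2 := by field_simp; ring
      _ ≤ n * ((1 - c) * t / 4) / 2 := by gcongr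
      _ ≤ n * ((k : ℝ) - 1) / 2 := by gcongr; exact div_four_le_floor_sub_one hk
      _ = #G.edgeFinset := by linarith

/-- A disjoint union of cliques (fibers of `f`) each of size at most `(1-c)t` is
`(c,t)`-sparse and contains no induced cycle of length at least `4`; moreover, if each
clique has size exactly `⌊(1-c)t⌋ ≥ 2` and `t = Ω(n)` (i.e. `n ≤ C·t`), it has `Ω(n²)`
edges. -/
theorem cliques_sparse_no_induced_cycle_many_edges (c C : ℝ)
    (hc0 : 0 < c) (hc1 : c < 1) (hC : 0 < C) :
    ∃ c' > (0 : ℝ),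
      ∀ (V : Type) (_ : Fintype V) (_ : DecidableEq V)
        (ι : Type) (_ : DecidableEq ι) (f : V → ι)
        (G : SimpleGraph V) (_ : DecidableRel G.Adj) (t : ℝ),
        (∀ u v : V, G.Adj u v ↔ (u ≠ v ∧ f u = f v)) →
        -- (1) if every clique has size at most (1-c)t, then G is (c,t)-sparse
        (((∀ v : V, ((Finset.univ.filter fun u => f u = f v).card : ℝ) ≤ (1 - c) * t) →
          ∀ A B : Finset V, t ≤ A.card → t ≤ B.card →
            (epairs G A B : ℝ) ≤ (1 - c) * A.card * B.card) ∧
        -- (2) G has no induced cycle of length at least 4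
        (∀ m : ℕ, 4 ≤ m → IsEmpty (SimpleGraph.cycleGraph m ↪g G)) ∧
        -- (3) if every clique has size exactly ⌊(1-c)t⌋ ≥ 2 and n ≤ C·t,
        --     then G has at least c'·n² edges
        ((∀ v : V, (Finset.univ.filter fun u => f u = f v).card = ⌊(1 - c) * t⌋₊) →
          2 ≤ ⌊(1 - c) * t⌋₊ →
          (Fintype.card V : ℝ) ≤ C * t →
          c' * (Fintype.card V : ℝ) ^ 2 ≤ (G.edgeFinset.card : ℝ))) :=
  cliques_sparse_no_induced_cycle_many_edges_general c C hc1 hC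
end

section
/- Let G be a graph in which for every vertex u, the set X_u = {v ≠ u : |N(u) ∩ N(v)| > D} has size less than m. If every vertex of G has degree at least δ with δ ≥ 2(ℓ·D + ℓ·m + ℓ + 1), then for every vertex u and every 1 ≤ s ≤ ℓ, the number of induced paths of length s starting at u is at least (δ/2)^s. -/
/-!
Call an induced path `v₀ ⋯ v_s` from `u` good if its endpoint has at most `D` common neighbours
with every earlier vertex. A good path extends to a good path by any neighbour `v` of `v_s` outside
`{v_i} ∪ X_{v_i}` for all `i ≤ s` and outside `N(v_i)` for all `i < s`. The first exclusion costs at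
most `(s + 1) m` vertices; by goodness, the second costs at most `s D` neighbours of `v_s`. For
`s < ℓ` this leaves at least `δ - ℓ D - ℓ m ≥ δ / 2` extensions, and induction on `s` gives
`(δ / 2) ^ s` good paths.
-/

open Finset

def IsInducedPath {V : Type*} (G : SimpleGraph V) (s : ℕ) (p : Fin (s + 1) → V) : Prop :=
  Function.Injective p ∧
  (∀ i : Fin s, G.Adj (p i.castSucc) (p i.succ)) ∧
  (∀ i j : Fin (s + 1), (i : ℕ) + 2 ≤ (j : ℕ) → ¬ G.Adj (p i) (p j))

lemma Fin.sum_card_le_card_of_snoc_mem {α : Type*} {n : ℕ} {S : Finset (Fin n → α)}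
    {T : Finset (Fin (n + 1) → α)} (f : (Fin n → α) → Finset α)
    (h : ∀ q ∈ S, ∀ v ∈ f q, (Fin.snoc q v : Fin (n + 1) → α) ∈ T) :
    ∑ q ∈ S, #(f q) ≤ #T := by
  rw [← card_sigma]
  refine card_le_card_of_injOn (fun x => (Fin.snoc x.1 x.2 : Fin (n + 1) → α))
    (fun x hx => h _ (mem_sigma.1 hx).1 _ (mem_sigma.1 hx).2) ?_
  rintro ⟨q, v⟩ - ⟨q', v'⟩ - hqv
  obtain ⟨rfl, rfl⟩ := Fin.snoc_injective2 hqv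
  rfl

lemma IsInducedPath.snoc {V : Type*} {G : SimpleGraph V} {s : ℕ} {q : Fin (s + 1) → V} {v : V}
    (hq : IsInducedPath G s q) (hadj : G.Adj (q (Fin.last s)) v) (hnew : v ∉ Set.range q)
    (hchord : ∀ i : Fin s, ¬ G.Adj (q i.castSucc) v) :
    IsInducedPath G (s + 1) (Fin.snoc q v : Fin (s + 2) → V) := by
  obtain ⟨hinj, hpath, hnochord⟩ := hq
  refine ⟨Fin.snoc_injective_of_injective hinj hnew, fun i => ?_, fun i j hij => ?_⟩
  · induction i using Fin.lastCases with
    | last => simpa [Fin.succ_last] using hadj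
    | cast i => simpa only [Fin.succ_castSucc, Fin.snoc_castSucc] using hpath i
  · induction j using Fin.lastCases with
    | last =>
      obtain ⟨k, rfl⟩ : ∃ k : Fin s, i = k.castSucc.castSucc :=
        ⟨⟨i, by rw [Fin.val_last] at hij; omega⟩, rfl⟩
      simpa using hchord k
    | cast j =>
      obtain ⟨k, rfl⟩ : ∃ k : Fin (s + 1), i = k.castSucc :=
        ⟨⟨i, by rw [Fin.val_castSucc] at hij; omega⟩, rfl⟩
      simpa using hnochord k j (by simpa using hij)

namespace SimpleGraph

variable {V : Type*} [Fintype V] [DecidableEq V] (G : SimpleGraph V) [DecidableRel G.Adj] (D : ℕ)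

/-- The set `X_w` of the paper. -/
def highCodegree (w : V) : Finset V :=
  {v | v ≠ w ∧ D < #(G.neighborFinset w ∩ G.neighborFinset v)}

def IsGoodPath (u : V) (s : ℕ) (p : Fin (s + 1) → V) : Prop :=
  p 0 = u ∧ IsInducedPath G s p ∧
    ∀ i : Fin s, #(G.neighborFinset (p i.castSucc) ∩ G.neighborFinset (p (Fin.last s))) ≤ D

def extensions {s : ℕ} (q : Fin (s + 1) → V) : Finset V :=
  G.neighborFinset (q (Fin.last s)) \
    ((univ.biUnion fun i => insert (q i) (G.highCodegree D (q i))) ∪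
      univ.biUnion fun i : Fin s => G.neighborFinset (q i.castSucc))

open Classical in
noncomputable def goodPaths (u : V) (s : ℕ) : Finset (Fin (s + 1) → V) :=
  {p | G.IsGoodPath D u s p}

variable {G D} {u : V} {s : ℕ} {q : Fin (s + 1) → V}

@[simp]
lemma mem_goodPaths : q ∈ G.goodPaths D u s ↔ G.IsGoodPath D u s q := by
  simp [goodPaths]

lemma isGoodPath_zero : G.IsGoodPath D u 0 (fun _ => u) :=
  ⟨rfl, ⟨fun _ _ _ => Fin.ext (by omega), Fin.elim0, fun i j hij => by omega⟩, Fin.elim0⟩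

lemma IsGoodPath.snoc (hq : G.IsGoodPath D u s q) {v : V} (hv : v ∈ G.extensions D q) :
    G.IsGoodPath D u (s + 1) (Fin.snoc q v : Fin (s + 2) → V) := by
  obtain ⟨h0, hind, -⟩ := hq
  simp only [extensions, mem_sdiff, mem_union, mem_biUnion, mem_univ, true_and, mem_insert,
    mem_neighborFinset, highCodegree, mem_filter, not_or, not_exists, not_and_or, not_lt,
    not_not] at hv
  obtain ⟨hadj, hcodeg, hchord⟩ := hv
  refine ⟨by rwa [← Fin.castSucc_zero, Fin.snoc_castSucc],
    hind.snoc hadj (fun ⟨i, hi⟩ => (hcodeg i).1 hi.symm) hchord, fun i => ?_⟩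
  rw [Fin.snoc_castSucc, Fin.snoc_last]
  exact (hcodeg i).2.resolve_left (hcodeg i).1

lemma IsGoodPath.degree_le_card_extensions {m : ℕ} (hm : ∀ w, #(G.highCodegree D w) < m)
    (hq : G.IsGoodPath D u s q) :
    G.degree (q (Fin.last s)) ≤ #(G.extensions D q) + (s * D + (s + 1) * m) := by
  set N := G.neighborFinset (q (Fin.last s))
  set A := univ.biUnion fun i => insert (q i) (G.highCodegree D (q i))
  set B := univ.biUnion fun i : Fin s => G.neighborFinset (q i.castSucc)
  have hA : #A ≤ (s + 1) * m := by
    exact (card_biUnion_le_card_mul univ _ m fun i _ =>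
      (card_insert_le _ _).trans (hm (q i))).trans (by simp)
  have hNB : #(N ∩ B) ≤ s * D := by
    rw [inter_biUnion]
    refine (card_biUnion_le_card_mul univ _ D fun i _ => ?_).trans (by simp)
    rw [inter_comm]
    exact hq.2.2 i
  have hcover : #(N ∩ (A ∪ B)) ≤ #A + #(N ∩ B) :=
    (card_le_card fun x => by simp only [mem_inter, mem_union]; tauto).trans (card_union_le _ _)
  have hsplit : #(G.extensions D q) + #(N ∩ (A ∪ B)) = G.degree (q (Fin.last s)) :=
    card_sdiff_add_card_inter N (A ∪ B)
  omega

lemma mul_card_goodPaths_le {a : ℝ} (ha : ∀ q ∈ G.goodPaths D u s, a ≤ #(G.extensions D q)) :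
    a * #(G.goodPaths D u s) ≤ #(G.goodPaths D u (s + 1)) := by
  calc a * #(G.goodPaths D u s) = ∑ q ∈ G.goodPaths D u s, a := by simp [mul_comm]
    _ ≤ ∑ q ∈ G.goodPaths D u s, (#(G.extensions D q) : ℝ) := sum_le_sum ha
    _ ≤ #(G.goodPaths D u (s + 1)) := by
      rw [← Nat.cast_sum]
      exact_mod_cast Fin.sum_card_le_card_of_snoc_mem _ fun q hq v hv =>
        mem_goodPaths.2 ((mem_goodPaths.1 hq).snoc hv)

lemma pow_le_card_goodPaths {m ℓ : ℕ} {δ : ℝ} (hm : ∀ w, #(G.highCodegree D w) < m)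
    (hdeg : ∀ v, δ ≤ G.degree v) (hδ : 2 * ((ℓ : ℝ) * D + ℓ * m) ≤ δ) :
    ∀ t ≤ ℓ, (δ / 2) ^ t ≤ #(G.goodPaths D u t) := by
  have hδ0 : 0 ≤ δ / 2 := by linarith [show (0 : ℝ) ≤ ℓ * D + ℓ * m by positivity]
  intro t ht
  induction t with
  | zero =>
    simpa using card_pos.2 ⟨fun _ => u, mem_goodPaths.2 isGoodPath_zero⟩
  | succ t ih =>
    have hext : ∀ q ∈ G.goodPaths D u t, δ / 2 ≤ #(G.extensions D q) := fun q hq => by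
      have hcount : (G.degree (q (Fin.last t)) : ℝ) ≤ #(G.extensions D q) + (ℓ * D + ℓ * m) := by
        have hlen : t * D + (t + 1) * m ≤ ℓ * D + ℓ * m := by gcongr; omega
        exact_mod_cast ((mem_goodPaths.1 hq).degree_le_card_extensions hm).trans (by omega)
      linarith [hdeg (q (Fin.last t))]
    calc (δ / 2) ^ (t + 1) = δ / 2 * (δ / 2) ^ t := pow_succ' _ _
      _ ≤ δ / 2 * #(G.goodPaths D u t) := mul_le_mul_of_nonneg_left (ih (by omega)) hδ0
      _ ≤ #(G.goodPaths D u (t + 1)) := mul_card_goodPaths_le hext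

lemma card_goodPaths_le (u : V) (s : ℕ) :
    #(G.goodPaths D u s) ≤ Nat.card {p : Fin (s + 1) → V // p 0 = u ∧ IsInducedPath G s p} := by
  classical
  rw [Nat.card_eq_fintype_card, Fintype.card_subtype]
  exact card_le_card fun p hp => by
    obtain ⟨h0, hind, -⟩ := mem_goodPaths.1 hp
    simpa using (⟨h0, hind⟩ : _ ∧ _)

end SimpleGraph

/-- If for every vertex `u` the set `X_u = {v ≠ u : |N(u) ∩ N(v)| > D}` has size less
than `m`, and every vertex has degree at least `δ ≥ 2(ℓD + ℓm + ℓ + 1)`, then for every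
vertex `u` and every `1 ≤ s ≤ ℓ` there are at least `(δ/2)^s` induced `s`-paths
starting at `u`. -/
theorem many_induced_paths {V : Type*} [Fintype V] [DecidableEq V]
    (G : SimpleGraph V) [DecidableRel G.Adj] (D m ℓ : ℕ) (δ : ℝ)
    (hX : ∀ u : V,
      ({v : V | v ≠ u ∧ D < (G.neighborFinset u ∩ G.neighborFinset v).card} : Set V).ncard < m)
    (hdeg : ∀ v : V, δ ≤ (G.degree v : ℝ))
    (hδ : 2 * ((ℓ : ℝ) * D + (ℓ : ℝ) * m + ℓ + 1) ≤ δ) :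
    ∀ u : V, ∀ s : ℕ, 1 ≤ s → s ≤ ℓ →
      (δ / 2) ^ s ≤
        (Nat.card {p : Fin (s + 1) → V // p 0 = u ∧ IsInducedPath G s p} : ℝ) := by
  intro u s _ hs
  have hm : ∀ w, #(G.highCodegree D w) < m := fun w => by
    simpa [SimpleGraph.highCodegree, ← Set.ncard_coe_finset] using hX w
  calc (δ / 2) ^ s ≤ #(G.goodPaths D u s) :=
        SimpleGraph.pow_le_card_goodPaths hm hdeg (by linarith [Nat.cast_nonneg (α := ℝ) ℓ]) s hs
    _ ≤ _ := by exact_mod_cast SimpleGraph.card_goodPaths_le u s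
end

section
/- Let G be a (1-ε, m)-sparse graph with minimum degree at least m. Then for every vertex u, the number of vertices v ≠ u with |N(u) ∩ N(v)| > εK d is less than m, provided every vertex has degree at most Kd and minimum degree at least d/K with d/K ≥ m. More precisely: if G is K-almost-regular with average degree d, is (1-ε, βt)-sparse, and d/K ≥ βt, then for every vertex u, |{v ≠ u : |N(u)∩N(v)| > εKd}| < βt. -/
open Finset

/-! If `m` vertices `v` had more than `ε deg(u)` common neighbours with `u`, then these `m`
vertices together with the `deg(u) ≥ m` neighbours of `u` would span more than
`ε · m · deg(u)` edges, against `(1-ε, m)`-sparseness. -/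

namespace SimpleGraph

variable {V : Type*} [DecidableEq V] (G : SimpleGraph V) [DecidableRel G.Adj]

/-- `G` is `(1-ε, m)`-sparse. -/
def IsSparse (ε m : ℝ) : Prop :=
  ∀ A B : Finset V, m ≤ #A → m ≤ #B → (epairs G A B : ℝ) ≤ ε * #A * #B

theorem epairs_eq_sum_card_filter_adj (A B : Finset V) :
    epairs G A B = ∑ a ∈ A, #{b ∈ B | G.Adj a b} := by
  simp only [epairs, card_filter, sum_product]

theorem epairs_neighborFinset_eq_sum_card_inter [Fintype V] (A : Finset V) (u : V) :
    epairs G A (G.neighborFinset u) =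
      ∑ a ∈ A, #(G.neighborFinset u ∩ G.neighborFinset a) := by
  rw [epairs_eq_sum_card_filter_adj]
  refine sum_congr rfl fun a _ => congrArg card ?_
  ext b
  simp

theorem card_mul_lt_epairs_neighborFinset [Fintype V] {A : Finset V} (hA : A.Nonempty)
    {u : V} {c : ℝ} (hc : ∀ a ∈ A, c < #(G.neighborFinset u ∩ G.neighborFinset a)) :
    #A * c < epairs G A (G.neighborFinset u) := by
  rw [epairs_neighborFinset_eq_sum_card_inter, Nat.cast_sum]
  simpa only [sum_const, nsmul_eq_mul] using sum_lt_sum_of_nonempty hA hc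

theorem ncard_large_codegree_lt_of_isSparse [Fintype V] {ε m : ℝ} (hG : G.IsSparse ε m) (hm : 0 < m) {u : V}
    (hu : m ≤ G.degree u) :
    (({v | ε * G.degree u < #(G.neighborFinset u ∩ G.neighborFinset v)} : Set V).ncard : ℝ)
      < m := by
  rw [Set.ncard_eq_toFinset_card']
  set A := ({v | ε * G.degree u < #(G.neighborFinset u ∩ G.neighborFinset v)} : Set V).toFinset
  by_contra! hA
  have hA_nonempty : A.Nonempty := card_pos.1 (by exact_mod_cast hm.trans_le hA)
  have hlower := G.card_mul_lt_epairs_neighborFinset hA_nonempty (u := u) (c := ε * G.degree u)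
    fun a ha => by simpa [A] using ha
  have hupper := hG A (G.neighborFinset u) hA (by rwa [card_neighborFinset_eq_degree])
  rw [card_neighborFinset_eq_degree] at hupper
  linarith

end SimpleGraph

theorem few_vertices_with_large_codegree_general {V : Type*} [Fintype V] [DecidableEq V]
    (G : SimpleGraph V) [DecidableRel G.Adj] (ε K d β t : ℝ)
    (hε : 0 ≤ ε) (hβt : 0 < β * t)
    (hdeg : ∀ v : V, d / K ≤ (G.degree v : ℝ) ∧ (G.degree v : ℝ) ≤ K * d)
    (hsparse : ∀ A B : Finset V, β * t ≤ A.card → β * t ≤ B.card →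
      (epairs G A B : ℝ) ≤ ε * A.card * B.card)
    (hdK : β * t ≤ d / K) :
    ∀ u : V,
      (({v : V | v ≠ u ∧
          ε * K * d < ((G.neighborFinset u ∩ G.neighborFinset v).card : ℝ)} : Set V).ncard : ℝ)
        < β * t := by
  intro u
  have hsubset : {v : V | v ≠ u ∧
      ε * K * d < ((G.neighborFinset u ∩ G.neighborFinset v).card : ℝ)} ⊆
      {v | ε * G.degree u < #(G.neighborFinset u ∩ G.neighborFinset v)} := by
    have hthreshold : ε * G.degree u ≤ ε * K * d := by
      rw [mul_assoc]; exact mul_le_mul_of_nonneg_left (hdeg u).2 hε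
    exact fun v hv => hthreshold.trans_lt hv.2
  refine lt_of_le_of_lt ?_ (G.ncard_large_codegree_lt_of_isSparse hsparse hβt (hdK.trans (hdeg u).1))
  exact_mod_cast Set.ncard_le_ncard hsubset (Set.toFinite _)

/-- If `G` is `K`-almost-regular with average degree `d` (so `d/K ≤ deg(v) ≤ Kd` for
every `v`), is `(1-ε, βt)`-sparse, and `d/K ≥ βt`, then for every vertex `u` the set
`{v ≠ u : |N(u) ∩ N(v)| > εKd}` has size less than `βt`. -/
theorem few_vertices_with_large_codegree {V : Type*} [Fintype V] [DecidableEq V]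
    (G : SimpleGraph V) [DecidableRel G.Adj] (ε K d β t : ℝ)
    (hε : 0 ≤ ε) (hK : 0 < K) (hβt : 0 < β * t)
    (hdeg : ∀ v : V, d / K ≤ (G.degree v : ℝ) ∧ (G.degree v : ℝ) ≤ K * d)
    (hsparse : ∀ A B : Finset V, β * t ≤ A.card → β * t ≤ B.card →
      (epairs G A B : ℝ) ≤ ε * A.card * B.card)
    (hdK : β * t ≤ d / K) :
    ∀ u : V,
      (({v : V | v ≠ u ∧
          ε * K * d < ((G.neighborFinset u ∩ G.neighborFinset v).card : ℝ)} : Set V).ncard : ℝ)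
        < β * t :=
  few_vertices_with_large_codegree_general G ε K d β t hε hβt hdeg hsparse hdK
end

section
/- Let G be a graph and 0 < ε < 1. Suppose P₁ and P₂ are two families of pairwise internally vertex-disjoint s-paths in G (s ≥ 2), with |P₁|, |P₂| ≥ γt/2 and (s-1)γ/2 ≥ β and 1/(s-1)^2 > ε. If G is (1-ε, βt)-sparse, then there exist P ∈ P₁ and Q ∈ P₂ such that no edge of G joins an internal vertex of P to an internal vertex of Q. -/
open Finset

set_option maxHeartbeats 1000000 in
/-- Given two families of pairwise internally vertex-disjoint `s`-paths, each of size at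
least `γt/2`, with `(s-1)γ/2 ≥ β` and `ε < 1/(s-1)²`, in a `(1-ε, βt)`-sparse graph
there exist a path in the first family and a path in the second family with no edge of
`G` joining their internal sets. -/
theorem exists_nonattached_pair_of_paths {V : Type*} [Fintype V] [DecidableEq V]
    (G : SimpleGraph V) [DecidableRel G.Adj] (ε β γ t : ℝ) (s p q : ℕ)
    (hs : 2 ≤ s) (hε0 : 0 < ε) (hε1 : ε < 1) (hγ : 0 < γ) (ht : 0 < t)
    (hp : γ * t / 2 ≤ (p : ℝ)) (hq : γ * t / 2 ≤ (q : ℝ))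
    (hβ : β ≤ ((s : ℝ) - 1) * γ / 2) (hε2 : ε < 1 / ((s : ℝ) - 1) ^ 2)
    (P₁ : Fin p → (Fin (s + 1) → V)) (P₂ : Fin q → (Fin (s + 1) → V))
    (hP₁ : ∀ i, Function.Injective (P₁ i) ∧
      ∀ j : Fin s, G.Adj ((P₁ i) j.castSucc) ((P₁ i) j.succ))
    (hP₂ : ∀ i, Function.Injective (P₂ i) ∧
      ∀ j : Fin s, G.Adj ((P₂ i) j.castSucc) ((P₂ i) j.succ))
    (hdisj₁ : ∀ i j : Fin p, i ≠ j →
      ∀ a a' : Fin (s + 1), a ≠ 0 → a ≠ Fin.last s → a' ≠ 0 → a' ≠ Fin.last s →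
        (P₁ i) a ≠ (P₁ j) a')
    (hdisj₂ : ∀ i j : Fin q, i ≠ j →
      ∀ a a' : Fin (s + 1), a ≠ 0 → a ≠ Fin.last s → a' ≠ 0 → a' ≠ Fin.last s →
        (P₂ i) a ≠ (P₂ j) a')
    (hsparse : ∀ A B : Finset V, β * t ≤ A.card → β * t ≤ B.card →
      (epairs G A B : ℝ) ≤ ε * A.card * B.card) :
    ∃ (i : Fin p) (j : Fin q),
      ∀ a a' : Fin (s + 1), a ≠ 0 → a ≠ Fin.last s → a' ≠ 0 → a' ≠ Fin.last s →
        ¬ G.Adj ((P₁ i) a) ((P₂ j) a') := by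

  by_contra hcon
  push_neg at hcon
  choose a b h1 h2 h3 h4 hadj using hcon
  classical
  set S : Finset (Fin (s + 1)) := univ \ {0, Fin.last s} with hSdef
  have hlast0 : (Fin.last s) ≠ (0 : Fin (s + 1)) := by
    simp [Fin.ext_iff]; omega
  have hmemS : ∀ x : Fin (s + 1), x ∈ S ↔ x ≠ 0 ∧ x ≠ Fin.last s := by
    intro x; simp [hSdef]
  have hScard : S.card = s - 1 := by
    rw [hSdef, card_sdiff_of_subset (subset_univ _)]
    rw [card_insert_of_notMem (by simp [hlast0.symm]), card_singleton]
    simp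
  set V₁ : Finset V := univ.biUnion (fun i => S.image (P₁ i)) with hV₁def
  set V₂ : Finset V := univ.biUnion (fun i => S.image (P₂ i)) with hV₂def
  have hdisjimg₁ : ∀ i ∈ (univ : Finset (Fin p)), ∀ j ∈ (univ : Finset (Fin p)), i ≠ j →
      Disjoint (S.image (P₁ i)) (S.image (P₁ j)) := by
    intro i _ j _ hij
    rw [disjoint_left]
    intro v hv hv'
    obtain ⟨x, hx, hxv⟩ := mem_image.1 hv
    obtain ⟨y, hy, hyv⟩ := mem_image.1 hv'
    rw [hmemS] at hx hy
    exact hdisj₁ i j hij x y hx.1 hx.2 hy.1 hy.2 (hxv.trans hyv.symm)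
  have hdisjimg₂ : ∀ i ∈ (univ : Finset (Fin q)), ∀ j ∈ (univ : Finset (Fin q)), i ≠ j →
      Disjoint (S.image (P₂ i)) (S.image (P₂ j)) := by
    intro i _ j _ hij
    rw [disjoint_left]
    intro v hv hv'
    obtain ⟨x, hx, hxv⟩ := mem_image.1 hv
    obtain ⟨y, hy, hyv⟩ := mem_image.1 hv'
    rw [hmemS] at hx hy
    exact hdisj₂ i j hij x y hx.1 hx.2 hy.1 hy.2 (hxv.trans hyv.symm)
  have hV₁card : V₁.card = p * (s - 1) := by
    rw [hV₁def, card_biUnion hdisjimg₁]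
    have : ∀ i : Fin p, (S.image (P₁ i)).card = s - 1 := fun i => by
      rw [card_image_of_injective _ (hP₁ i).1, hScard]
    simp [this]
  have hV₂card : V₂.card = q * (s - 1) := by
    rw [hV₂def, card_biUnion hdisjimg₂]
    have : ∀ i : Fin q, (S.image (P₂ i)).card = s - 1 := fun i => by
      rw [card_image_of_injective _ (hP₂ i).1, hScard]
    simp [this]
  have hs1 : (1 : ℝ) ≤ (s : ℝ) - 1 := by
    have : (2 : ℝ) ≤ (s : ℝ) := by exact_mod_cast hs
    linarith
  have hcastV₁ : (V₁.card : ℝ) = (p : ℝ) * ((s : ℝ) - 1) := by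
    rw [hV₁card]
    push_cast [Nat.cast_sub (by omega : 1 ≤ s)]
    ring
  have hcastV₂ : (V₂.card : ℝ) = (q : ℝ) * ((s : ℝ) - 1) := by
    rw [hV₂card]
    push_cast [Nat.cast_sub (by omega : 1 ≤ s)]
    ring
  have hgt2 : 0 < γ * t / 2 := by positivity
  have hb1 : β * t ≤ (V₁.card : ℝ) := by
    rw [hcastV₁]
    calc β * t ≤ (((s : ℝ) - 1) * γ / 2) * t := by nlinarith
      _ = ((s : ℝ) - 1) * (γ * t / 2) := by ring
      _ ≤ ((s : ℝ) - 1) * (p : ℝ) := by nlinarith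
      _ = (p : ℝ) * ((s : ℝ) - 1) := by ring
  have hb2 : β * t ≤ (V₂.card : ℝ) := by
    rw [hcastV₂]
    calc β * t ≤ (((s : ℝ) - 1) * γ / 2) * t := by nlinarith
      _ = ((s : ℝ) - 1) * (γ * t / 2) := by ring
      _ ≤ ((s : ℝ) - 1) * (q : ℝ) := by nlinarith
      _ = (q : ℝ) * ((s : ℝ) - 1) := by ring
  -- lower bound on epairs
  have hcount : p * q ≤ epairs G V₁ V₂ := by
    have := Finset.card_le_card_of_injOn
      (f := fun ij : Fin p × Fin q => (P₁ ij.1 (a ij.1 ij.2), P₂ ij.2 (b ij.1 ij.2)))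
      (s := (univ : Finset (Fin p × Fin q)))
      (t := (V₁ ×ˢ V₂).filter fun pr => G.Adj pr.1 pr.2)
      (by
        rintro ⟨i, j⟩ -
        simp only [mem_coe, mem_filter, mem_product]
        refine ⟨⟨?_, ?_⟩, hadj i j⟩
        · exact mem_biUnion.2 ⟨i, mem_univ _, mem_image.2 ⟨a i j, (hmemS _).2 ⟨h1 i j, h2 i j⟩, rfl⟩⟩
        · exact mem_biUnion.2 ⟨j, mem_univ _, mem_image.2 ⟨b i j, (hmemS _).2 ⟨h3 i j, h4 i j⟩, rfl⟩⟩)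
      (by
        rintro ⟨i, j⟩ - ⟨i', j'⟩ - heq
        have he1 : P₁ i (a i j) = P₁ i' (a i' j') := congrArg Prod.fst heq
        have he2 : P₂ j (b i j) = P₂ j' (b i' j') := congrArg Prod.snd heq
        have hii : i = i' := by
          by_contra hne
          exact hdisj₁ i i' hne (a i j) (a i' j') (h1 i j) (h2 i j) (h1 i' j') (h2 i' j') he1
        have hjj : j = j' := by
          by_contra hne
          exact hdisj₂ j j' hne (b i j) (b i' j') (h3 i j) (h4 i j) (h3 i' j') (h4 i' j') he2
        simp [hii, hjj])
    simpa [epairs] using this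
  have hsp := hsparse V₁ V₂ hb1 hb2
  have hpq : (p : ℝ) * q ≤ ε * ((p : ℝ) * ((s : ℝ) - 1)) * ((q : ℝ) * ((s : ℝ) - 1)) := by
    calc (p : ℝ) * q ≤ (epairs G V₁ V₂ : ℝ) := by exact_mod_cast hcount
      _ ≤ ε * V₁.card * V₂.card := hsp
      _ = ε * ((p : ℝ) * ((s : ℝ) - 1)) * ((q : ℝ) * ((s : ℝ) - 1)) := by
          rw [hcastV₁, hcastV₂]
  have hp0 : (0 : ℝ) < (p : ℝ) := lt_of_lt_of_le hgt2 hp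
  have hq0 : (0 : ℝ) < (q : ℝ) := lt_of_lt_of_le hgt2 hq
  have hsq : (0 : ℝ) < ((s : ℝ) - 1) ^ 2 := by nlinarith
  have hlt1 : ε * ((s : ℝ) - 1) ^ 2 < 1 := by
    have h := mul_lt_mul_of_pos_right hε2 hsq
    rwa [one_div, inv_mul_cancel₀ hsq.ne'] at h
  have heq : ε * ((p : ℝ) * ((s : ℝ) - 1)) * ((q : ℝ) * ((s : ℝ) - 1))
      = (ε * ((s : ℝ) - 1) ^ 2) * ((p : ℝ) * (q : ℝ)) := by ring
  rw [heq] at hpq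
  have hfin := mul_lt_mul_of_pos_right hlt1 (mul_pos hp0 hq0)
  rw [one_mul] at hfin
  linarith
end
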